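/- (Ultrametric Schwarz lemma, evaluation form) Let f = Σ_{n ≥ h} a_n z^n be a power series over ℚ_p vanishing to order ≥ h at 0, with |f|_R < ∞, and let 0 < R' ≤ R. Then for every z ∈ ℚ_p with |z|_p ≤ R' (assuming convergence of f at z), |f(z)|_p ≤ (R'/R)^h |f|_R. -/

import Mathlib

open PowerSeries ENNReal

/-- The `R`-Gauss norm `|f|_R = sup_n R^n |a_n|_p` of a power series over `ℚ_p`. -/
noncomputable def gaussNorm {p : ℕ} [Fact p.Prime] (f : PowerSeries ℚ_[p]) (R : ℝ) : ℝ≥0∞ :=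
  ⨆ n : ℕ, ENNReal.ofReal (R ^ n * ‖coeff n f‖)

/-!
In an ultrametric group the norm of a sum `∑' i, f i` is at most `⨆ i, ‖f i‖` (trivially so when
the series diverges and the sum is `0`). For `n ≥ h` and `|z| ≤ R' ≤ R` the `n`-th term satisfies
`|a_n z^n| ≤ (R'/R)^n · R^n |a_n| ≤ (R'/R)^h |f|_R`, and the terms with `n < h` vanish.
-/

theorem IsUltrametricDist.ofReal_norm_tsum_le_iSup {M ι : Type*} [SeminormedAddCommGroup M]
    [IsUltrametricDist M] (f : ι → M) :
    ENNReal.ofReal ‖∑' i, f i‖ ≤ ⨆ i, ENNReal.ofReal ‖f i‖ := by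
  by_cases hfin : (⨆ i, ENNReal.ofReal ‖f i‖) = ⊤
  · exact hfin ▸ le_top
  have hterm (i : ι) : ‖f i‖ ≤ (⨆ i, ENNReal.ofReal ‖f i‖).toReal :=
    (ENNReal.ofReal_le_iff_le_toReal hfin).1 (le_iSup (fun i ↦ ENNReal.ofReal ‖f i‖) i)
  exact (ENNReal.ofReal_le_iff_le_toReal hfin).2
    (norm_tsum_le_of_forall_le_of_nonneg ENNReal.toReal_nonneg hterm)

theorem norm_mul_pow_le_of_vanishing {𝕜 : Type*} [NormedDivisionRing 𝕜] {a : ℕ → 𝕜} {h : ℕ}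
    (hvan : ∀ n < h, a n = 0) {r s : ℝ} (hr : 0 < r) (hsr : s ≤ r) {z : 𝕜} (hz : ‖z‖ ≤ s)
    (n : ℕ) : ‖a n * z ^ n‖ ≤ (s / r) ^ h * (r ^ n * ‖a n‖) := by
  have hs : 0 ≤ s := (norm_nonneg z).trans hz
  rcases lt_or_ge n h with hn | hn
  · simp [hvan n hn]
  calc ‖a n * z ^ n‖ = ‖a n‖ * ‖z‖ ^ n := by rw [norm_mul, norm_pow]
    _ ≤ ‖a n‖ * s ^ n := by gcongr
    _ = (s / r) ^ n * (r ^ n * ‖a n‖) := by rw [div_pow]; field_simp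
    _ ≤ (s / r) ^ h * (r ^ n * ‖a n‖) := by
        gcongr ?_ * _
        exact pow_le_pow_of_le_one (by positivity) (div_le_one_of_le₀ hsr hr.le) hn

theorem ofReal_mul_gaussNorm {p : ℕ} [Fact p.Prime] (f : PowerSeries ℚ_[p]) {c : ℝ} (hc : 0 ≤ c)
    (R : ℝ) : ENNReal.ofReal c * _root_.gaussNorm f R =
      ⨆ n : ℕ, ENNReal.ofReal (c * (R ^ n * ‖coeff n f‖)) := by
  simp only [_root_.gaussNorm, ENNReal.mul_iSup, ENNReal.ofReal_mul hc]

theorem ultrametric_schwarz_eval_general {p : ℕ} [Fact p.Prime]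
    (f : PowerSeries ℚ_[p]) (h : ℕ) (hvan : ∀ n < h, coeff n f = 0)
    (R R' : ℝ) (hR' : 0 < R') (hRR : R' ≤ R)
    (z : ℚ_[p]) (hz : ‖z‖ ≤ R') :
    ENNReal.ofReal ‖∑' n : ℕ, coeff n f * z ^ n‖ ≤
      ENNReal.ofReal ((R' / R) ^ h) * _root_.gaussNorm f R := by
  have hR : 0 < R := hR'.trans_le hRR
  rw [ofReal_mul_gaussNorm f (by positivity)]
  calc ENNReal.ofReal ‖∑' n : ℕ, coeff n f * z ^ n‖
      ≤ ⨆ n : ℕ, ENNReal.ofReal ‖coeff n f * z ^ n‖ :=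
        IsUltrametricDist.ofReal_norm_tsum_le_iSup _
    _ ≤ ⨆ n : ℕ, ENNReal.ofReal ((R' / R) ^ h * (R ^ n * ‖coeff n f‖)) :=
        iSup_mono fun n ↦ ENNReal.ofReal_le_ofReal <|
          norm_mul_pow_le_of_vanishing (a := fun n ↦ coeff n f) hvan hR hRR hz n

/-- Ultrametric Schwarz lemma, evaluation form: if `f` vanishes to order ≥ `h`
at `0`, `|f|_R < ∞`, `0 < R' ≤ R` and `|z|_p ≤ R'` with `f` convergent at `z`,
then `|f(z)|_p ≤ (R'/R)^h |f|_R`. -/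
theorem ultrametric_schwarz_eval {p : ℕ} [Fact p.Prime]
    (f : PowerSeries ℚ_[p]) (h : ℕ) (hvan : ∀ n < h, coeff n f = 0)
    (R R' : ℝ) (hR' : 0 < R') (hRR : R' ≤ R) (hf : _root_.gaussNorm f R ≠ ⊤)
    (z : ℚ_[p]) (hz : ‖z‖ ≤ R')
    (hconv : Summable (fun n : ℕ => coeff n f * z ^ n)) :
    ENNReal.ofReal ‖∑' n : ℕ, coeff n f * z ^ n‖ ≤
      ENNReal.ofReal ((R' / R) ^ h) * _root_.gaussNorm f R :=
  ultrametric_schwarz_eval_general f h hvan R R' hR' hRR z hz
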